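/- Let p be prime, g a generator of a cyclic group G of order p, and suppose the batch verification equation δ_0·v + ∑_{k∈I} δ_k·v_k = γ·(δ_0 + ∑_{k∈I} δ_k·a_k) in ZMod p fails for at least one index (i.e., (v, (v_k)) ≠ (γ, (γ·a_k))). Then the set of tuples (δ_0, (δ_k)_{k∈I}) ∈ (ZMod p)^{1+|I|} for which the equation nevertheless holds has cardinality exactly p^{|I|}; hence a uniformly random tuple satisfies it with probability 1/p. -/

import Mathlib

/-!
Moving everything to one side, the batch equation says that δ lies in the kernel of the linear
functional δ ↦ δ₀ (v - γ) + ∑ δₖ (vₖ - γ aₖ), which is nonzero exactly when the key is malformed.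
A nonzero functional to a field is surjective, so its kernel has index p in a space of size
p ^ (|I| + 1).
-/

section BatchDefect

variable {K : Type*} [CommRing K] {ι : Type*} [Fintype ι]

def batchDefect (v γ : K) (vk a : ι → K) : K × (ι → K) →ₗ[K] K :=
  (LinearMap.mulRight K (v - γ)).coprod (Fintype.linearCombination K fun k => vk k - γ * a k)

variable (v γ : K) (vk a : ι → K)

theorem batchDefect_apply (δ : K × (ι → K)) :
    batchDefect v γ vk a δ = δ.1 * (v - γ) + ∑ k, δ.2 k * (vk k - γ * a k) := by
  simp [batchDefect, Fintype.linearCombination_apply]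

theorem batch_equation_iff_batchDefect_eq_zero (δ : K × (ι → K)) :
    δ.1 * v + ∑ k, δ.2 k * vk k = γ * (δ.1 + ∑ k, δ.2 k * a k) ↔
      batchDefect v γ vk a δ = 0 := by
  rw [batchDefect_apply, ← sub_eq_zero]
  have : δ.1 * v + ∑ k, δ.2 k * vk k - γ * (δ.1 + ∑ k, δ.2 k * a k) =
      δ.1 * (v - γ) + ∑ k, δ.2 k * (vk k - γ * a k) := by
    simp only [mul_sub, Finset.sum_sub_distrib, mul_add, Finset.mul_sum, mul_left_comm γ]
    ring
  rw [this]

theorem batchDefect_eq_zero_iff :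
    batchDefect v γ vk a = 0 ↔ v = γ ∧ ∀ k, vk k = γ * a k := by
  classical
  constructor
  · intro h
    have hδ := fun δ => batchDefect_apply v γ vk a δ ▸ LinearMap.congr_fun h δ
    refine ⟨sub_eq_zero.mp (by simpa using hδ (1, 0)), fun k => sub_eq_zero.mp ?_⟩
    simpa [Pi.single_apply] using hδ (0, Pi.single k 1)
  · rintro ⟨rfl, hk⟩
    exact LinearMap.ext fun δ => by simp [batchDefect_apply, hk]

end BatchDefect

theorem Module.Dual.card_ker_mul_card_eq_card {K V : Type*} [DivisionRing K] [AddCommGroup V]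
    [Module K V] {f : Module.Dual K V} (hf : f ≠ 0) :
    Nat.card (LinearMap.ker f) * Nat.card K = Nat.card V := by
  rw [Submodule.card_eq_card_quotient_mul_card (LinearMap.ker f),
    Nat.card_congr (f.quotKerEquivOfSurjective (LinearMap.surjective hf)).toEquiv]

/-- Probabilistic soundness of the small-exponent test: if the key is not
well-formed, the set of exponent tuples satisfying the batch equation has
cardinality exactly p^|I|, i.e. a uniformly random tuple satisfies it with
probability 1/p. -/
theorem dbe_ss_batch_verification_cheating_probability
    {p : ℕ} (hp : p.Prime) [NeZero p] {ι : Type} [Fintype ι] [DecidableEq ι]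
    (v γ : ZMod p) (vk a : ι → ZMod p)
    (hbad : ¬ (v = γ ∧ ∀ k, vk k = γ * a k)) :
    Fintype.card {δ : ZMod p × (ι → ZMod p) //
        δ.1 * v + ∑ k, δ.2 k * vk k = γ * (δ.1 + ∑ k, δ.2 k * a k)} =
      p ^ (Fintype.card ι) ∧
    (Fintype.card {δ : ZMod p × (ι → ZMod p) //
        δ.1 * v + ∑ k, δ.2 k * vk k = γ * (δ.1 + ∑ k, δ.2 k * a k)} : ℚ) /
      (Fintype.card (ZMod p × (ι → ZMod p)) : ℚ) = 1 / p := by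
  have : Fact p.Prime := ⟨hp⟩
  have hspace : Fintype.card (ZMod p × (ι → ZMod p)) = p ^ Fintype.card ι * p := by
    simp [ZMod.card, mul_comm]
  have hker := Module.Dual.card_ker_mul_card_eq_card
    ((batchDefect_eq_zero_iff v γ vk a).not.mpr hbad)
  have hsol : Fintype.card {δ : ZMod p × (ι → ZMod p) //
      δ.1 * v + ∑ k, δ.2 k * vk k = γ * (δ.1 + ∑ k, δ.2 k * a k)} =
        Nat.card (LinearMap.ker (batchDefect v γ vk a)) := by
    rw [← Nat.card_eq_fintype_card]
    exact Nat.card_congr (Equiv.subtypeEquivRight fun δ =>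
      (batch_equation_iff_batchDefect_eq_zero v γ vk a δ).trans LinearMap.mem_ker.symm)
  rw [Nat.card_zmod, Nat.card_eq_fintype_card (α := ZMod p × (ι → ZMod p)), hspace] at hker
  have hcard := hsol.trans (Nat.eq_of_mul_eq_mul_right hp.pos hker)
  refine ⟨hcard, ?_⟩
  rw [hcard, hspace]
  push_cast
  field_simp [hp.ne_zero]
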